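/- Let σ ≥ 1 be a real number, N ∈ ℕ, and let a : ℝ → (ℤ³ → ℂ) be such that: for each n ∈ ℤ³ the map t ↦ a(t)(n) is twice continuously differentiable; a(t) is Hermitian-symmetric for every t; (∂_t² a)(t)(n) = −|n|² a(t)(n) − c_N(a(t))(n) for all t ∈ ℝ and n ∈ ℤ³; and for every T > 0, sup_{t∈[−T,T]} (‖a(t)‖_{h^σ} + ‖(∂_t a)(t)‖_{h^{σ−1}}) < ∞. Then the truncated energy E_N(t) = (1/2) ∑_{n∈ℤ³} |n|² |a(t)(n)|² + (1/2) ∑_{n∈ℤ³} |(∂_t a)(t)(n)|² + (1/4) Re ∑_{n₁,n₂,n₃,n₄∈ℤ³, |n_i|≤N for i=1,…,4, n₁+n₂+n₃+n₄=0} a(t)(n₁) a(t)(n₂) a(t)(n₃) a(t)(n₄) is independent of t (the quartic sum is a finite sum). -/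

import Mathlib

open scoped ENNReal NNReal BigOperators

noncomputable section

/-- The square of the Euclidean norm of a lattice point `n ∈ ℤ³`, as an integer. -/
def nsqZ (n : Fin 3 → ℤ) : ℤ := ∑ i, (n i)^2

/-- The squared Sobolev norm `‖a‖²_{h^σ} = ∑_{n∈ℤ³} ⟨n⟩^{2σ}|a(n)|²` in `[0,∞]`,
with `⟨n⟩^{2σ} = (1+|n|²)^σ`. -/
def hNormSq (σ : ℝ) (a : (Fin 3 → ℤ) → ℂ) : ℝ≥0∞ :=
  ∑' n : Fin 3 → ℤ, ENNReal.ofReal ((1 + (nsqZ n : ℝ)) ^ σ) * (‖a n‖₊ : ℝ≥0∞)^2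

/-- Hermitian symmetry `a(−n) = conj(a(n))`, corresponding to real-valued `u`. -/
def HermSymm (a : (Fin 3 → ℤ) → ℂ) : Prop :=
  ∀ n, a (-n) = (starRingEnd ℂ) (a n)

/-- The lattice points `n ∈ ℤ³` with Euclidean norm `|n| ≤ N`, as a finite set. -/
def latticeBall (N : ℕ) : Finset (Fin 3 → ℤ) :=
  (Finset.Icc (fun _ => -(N : ℤ)) (fun _ => (N : ℤ))).filter (fun m => nsqZ m ≤ (N : ℤ)^2)

/-- The truncated cubic convolution `c_N(a)(n)`: zero for `|n| > N`, and
`∑_{n₁+n₂+n₃=n, |nᵢ|≤N} a(n₁)a(n₂)a(n₃)` for `|n| ≤ N`. -/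
def cubicTrunc (N : ℕ) (a : (Fin 3 → ℤ) → ℂ) (n : Fin 3 → ℤ) : ℂ :=
  if nsqZ n ≤ (N : ℤ)^2 then
    ∑ m ∈ latticeBall N, ∑ k ∈ latticeBall N,
      (if nsqZ (n - m - k) ≤ (N : ℤ)^2 then a m * a k * a (n - m - k) else 0)
  else 0

/-- The Fourier-side truncated energy
`E_N(t) = ½ ∑ |n|²|a(n)|² + ½ ∑ |∂ₜa(n)|² + ¼ Re ∑_{n₁+n₂+n₃+n₄=0, |nᵢ|≤N} a(n₁)a(n₂)a(n₃)a(n₄)`. -/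
def truncEnergy (N : ℕ) (a : ℝ → (Fin 3 → ℤ) → ℂ) (t : ℝ) : ℝ :=
  (1/2) * (∑' n : Fin 3 → ℤ, (nsqZ n : ℝ) * ‖a t n‖^2)
    + (1/2) * (∑' n : Fin 3 → ℤ, ‖deriv (fun t' => a t' n) t‖^2)
    + (1/4) * (∑ n₁ ∈ latticeBall N, ∑ n₂ ∈ latticeBall N, ∑ n₃ ∈ latticeBall N,
        (if nsqZ (n₁ + n₂ + n₃) ≤ (N : ℤ)^2 then
          a t n₁ * a t n₂ * a t n₃ * a t (-(n₁ + n₂ + n₃)) else 0)).re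

/-!
Each Fourier mode carries the energy `|n|²|aₙ|² + |aₙ'|²`, whose time derivative is
`-2 Re (conj (c_N(a)(n)) aₙ')`. The modes with `|n| > N` are free harmonic oscillators, so their
energies are conserved one by one and the two infinite sums differ only in finitely many terms.
For the modes with `|n| ≤ N`, Hermitian symmetry turns `∑ₙ conj (c_N(a)(n)) aₙ'` into the
quartic form `Q(a', a, a, a)`, and since `Q` is symmetric in its four arguments this is
`¼ d/dt Q(a, a, a, a)`: the kinetic and potential contributions cancel.
-/

open Finset
open scoped InnerProductSpace

lemma nsqZ_nonneg (n : Fin 3 → ℤ) : (0 : ℝ) ≤ nsqZ n := by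
  exact_mod_cast sum_nonneg fun i _ => sq_nonneg (n i)

lemma nsqZ_neg (n : Fin 3 → ℤ) : nsqZ (-n) = nsqZ n := by
  simp [nsqZ]

lemma mem_latticeBall {N : ℕ} {n : Fin 3 → ℤ} : n ∈ latticeBall N ↔ nsqZ n ≤ (N : ℤ) ^ 2 := by
  refine ⟨fun h => (mem_filter.mp h).2, fun h => mem_filter.mpr ⟨?_, h⟩⟩
  have hcoord (i : Fin 3) : -(N : ℤ) ≤ n i ∧ n i ≤ N :=
    abs_le_of_sq_le_sq' ((single_le_sum (fun j _ => sq_nonneg (n j)) (mem_univ i)).trans h)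
      (Int.natCast_nonneg N)
  exact mem_Icc.mpr ⟨fun i => (hcoord i).1, fun i => (hcoord i).2⟩

lemma sum_latticeBall_comp_neg (N : ℕ) {M : Type*} [AddCommMonoid M] (f : (Fin 3 → ℤ) → M) :
    ∑ n ∈ latticeBall N, f (-n) = ∑ n ∈ latticeBall N, f n :=
  sum_nbij' (fun n => -n) (fun n => -n)
    (fun n hn => by simpa [mem_latticeBall, nsqZ_neg] using hn)
    (fun n hn => by simpa [mem_latticeBall, nsqZ_neg] using hn)
    (fun n _ => neg_neg n) (fun n _ => neg_neg n) (fun _ _ => rfl)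

lemma sum_latticeBall_reflect (N : ℕ) (s : Fin 3 → ℤ) (φ : (Fin 3 → ℤ) → (Fin 3 → ℤ) → ℂ) :
    ∑ n ∈ latticeBall N, (if nsqZ (n + s) ≤ (N : ℤ) ^ 2 then φ n (-(n + s)) else 0)
      = ∑ n ∈ latticeBall N, (if nsqZ (n + s) ≤ (N : ℤ) ^ 2 then φ (-(n + s)) n else 0) := by
  rw [← sum_filter, ← sum_filter]
  have hmem (n : Fin 3 → ℤ)
      (hn : n ∈ (latticeBall N).filter (fun m => nsqZ (m + s) ≤ (N : ℤ) ^ 2)) :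
      -(n + s) ∈ (latticeBall N).filter (fun m => nsqZ (m + s) ≤ (N : ℤ) ^ 2) := by
    rw [mem_filter, mem_latticeBall] at hn ⊢
    rw [nsqZ_neg, show -(n + s) + s = -n by abel, nsqZ_neg]
    exact ⟨hn.2, hn.1⟩
  have hinv (n : Fin 3 → ℤ) : -(-(n + s) + s) = n := by abel
  exact sum_nbij' (fun n => -(n + s)) (fun n => -(n + s)) hmem hmem
    (fun n _ => hinv n) (fun n _ => hinv n) (fun n _ => by rw [hinv])

section QuarticForm

variable (N : ℕ)

/-- `Q(f, g, h, k) = ∑_{n₁+n₂+n₃+n₄=0, |nᵢ|≤N} f(n₁) g(n₂) h(n₃) k(n₄)`, with `n₄` eliminated. -/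
def quarticForm (f g h k : (Fin 3 → ℤ) → ℂ) : ℂ :=
  ∑ n₁ ∈ latticeBall N, ∑ n₂ ∈ latticeBall N, ∑ n₃ ∈ latticeBall N,
    if nsqZ (n₁ + n₂ + n₃) ≤ (N : ℤ) ^ 2 then f n₁ * g n₂ * h n₃ * k (-(n₁ + n₂ + n₃)) else 0

variable (f g h k : (Fin 3 → ℤ) → ℂ)

lemma quarticForm_comm₁₂ : quarticForm N f g h k = quarticForm N g f h k := by
  rw [quarticForm, sum_comm]
  refine sum_congr rfl fun n₂ _ => sum_congr rfl fun n₁ _ => sum_congr rfl fun n₃ _ => ?_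
  rw [add_comm n₁ n₂, mul_comm (f n₁) (g n₂)]

lemma quarticForm_comm₂₃ : quarticForm N f g h k = quarticForm N f h g k := by
  refine sum_congr rfl fun n₁ _ => ?_
  rw [sum_comm]
  refine sum_congr rfl fun n₃ _ => sum_congr rfl fun n₂ _ => ?_
  rw [add_right_comm n₁ n₂ n₃]
  split_ifs <;> ring

lemma quarticForm_eq_sum_innermost :
    quarticForm N f g h k = ∑ n₂ ∈ latticeBall N, ∑ n₃ ∈ latticeBall N, ∑ n₁ ∈ latticeBall N,
      if nsqZ (n₁ + (n₂ + n₃)) ≤ (N : ℤ) ^ 2 then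
        f n₁ * g n₂ * h n₃ * k (-(n₁ + (n₂ + n₃))) else 0 := by
  rw [quarticForm, sum_comm]
  refine sum_congr rfl fun n₂ _ => ?_
  rw [sum_comm]
  simp only [add_assoc]

lemma quarticForm_comm₁₄ : quarticForm N f g h k = quarticForm N k g h f := by
  rw [quarticForm_eq_sum_innermost, quarticForm_eq_sum_innermost]
  refine sum_congr rfl fun n₂ _ => sum_congr rfl fun n₃ _ => ?_
  rw [sum_latticeBall_reflect N (n₂ + n₃) fun x y => f x * g n₂ * h n₃ * k y]
  refine sum_congr rfl fun n₁ _ => ?_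
  split_ifs <;> ring

lemma quarticForm_add_perm (b e : (Fin 3 → ℤ) → ℂ) :
    quarticForm N e b b b + quarticForm N b e b b + quarticForm N b b e b + quarticForm N b b b e
      = 4 * quarticForm N e b b b := by
  rw [quarticForm_comm₁₂ N b e, quarticForm_comm₂₃ N b b e, quarticForm_comm₁₂ N b e,
    quarticForm_comm₁₄ N b b b e]
  ring

end QuarticForm

lemma hasDerivAt_quarticForm_diag (N : ℕ) {b : ℝ → (Fin 3 → ℤ) → ℂ} {b' : (Fin 3 → ℤ) → ℂ} {t : ℝ}
    (hb : ∀ n, HasDerivAt (fun s => b s n) (b' n) t) :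
    HasDerivAt (fun s => quarticForm N (b s) (b s) (b s) (b s))
      (4 * quarticForm N b' (b t) (b t) (b t)) t := by
  rw [← quarticForm_add_perm]
  have hterm (n₁ n₂ n₃ : Fin 3 → ℤ) : HasDerivAt
      (fun s => if nsqZ (n₁ + n₂ + n₃) ≤ (N : ℤ) ^ 2 then
        b s n₁ * b s n₂ * b s n₃ * b s (-(n₁ + n₂ + n₃)) else 0)
      (if nsqZ (n₁ + n₂ + n₃) ≤ (N : ℤ) ^ 2 then
        b' n₁ * b t n₂ * b t n₃ * b t (-(n₁ + n₂ + n₃))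
          + b t n₁ * b' n₂ * b t n₃ * b t (-(n₁ + n₂ + n₃))
          + b t n₁ * b t n₂ * b' n₃ * b t (-(n₁ + n₂ + n₃))
          + b t n₁ * b t n₂ * b t n₃ * b' (-(n₁ + n₂ + n₃)) else 0) t := by
    split_ifs
    · exact ((((hb n₁).fun_mul (hb n₂)).fun_mul (hb n₃)).fun_mul (hb _)).congr_deriv (by ring)
    · exact hasDerivAt_const _ _
  refine (HasDerivAt.fun_sum fun n₁ _ => HasDerivAt.fun_sum fun n₂ _ =>
    HasDerivAt.fun_sum fun n₃ _ => hterm n₁ n₂ n₃).congr_deriv ?_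
  simp only [quarticForm, ← sum_add_distrib]
  refine sum_congr rfl fun n₁ _ => sum_congr rfl fun n₂ _ => sum_congr rfl fun n₃ _ => ?_
  split_ifs <;> simp

lemma sum_conj_cubicTrunc_mul (N : ℕ) {b : (Fin 3 → ℤ) → ℂ} (hb : HermSymm b)
    (e : (Fin 3 → ℤ) → ℂ) :
    ∑ n ∈ latticeBall N, starRingEnd ℂ (cubicTrunc N b n) * e n = quarticForm N e b b b := by
  refine sum_congr rfl fun n hn => ?_
  rw [cubicTrunc, if_pos (mem_latticeBall.mp hn), map_sum, sum_mul,
    ← sum_latticeBall_comp_neg N]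
  refine sum_congr rfl fun m _ => ?_
  rw [map_sum, sum_mul, ← sum_latticeBall_comp_neg N]
  refine sum_congr rfl fun k _ => ?_
  rw [sub_neg_eq_add, sub_neg_eq_add, hb m, hb k]
  split_ifs
  · simp only [map_mul, Complex.conj_conj, ← hb (n + m + k)]
    ring
  · simp

lemma sum_inner_cubicTrunc (N : ℕ) {b : (Fin 3 → ℤ) → ℂ} (hb : HermSymm b)
    (e : (Fin 3 → ℤ) → ℂ) :
    ∑ n ∈ latticeBall N, ⟪e n, cubicTrunc N b n⟫_ℝ = (quarticForm N e b b b).re := by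
  rw [← sum_conj_cubicTrunc_mul N hb, Complex.re_sum]
  refine sum_congr rfl fun n _ => ?_
  rw [Complex.inner, ← Complex.conj_re, map_mul, Complex.conj_conj]

def modeEnergy (c : ℝ) (g : ℝ → ℂ) (t : ℝ) : ℝ :=
  c * ‖g t‖ ^ 2 + ‖deriv g t‖ ^ 2

lemma hasDerivAt_modeEnergy (c : ℝ) {g : ℝ → ℂ} (hg : ContDiff ℝ 2 g) (t : ℝ) :
    HasDerivAt (modeEnergy c g) (2 * ⟪deriv g t, deriv (deriv g) t + c * g t⟫_ℝ) t := by
  have hpos := (hg.differentiable two_ne_zero t).hasDerivAt.norm_sq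
  have hvel := (hg.differentiable_deriv_two t).hasDerivAt.norm_sq
  refine ((hpos.const_mul c).add hvel).congr_deriv ?_
  rw [inner_add_right, ← Complex.real_smul, real_inner_smul_right, real_inner_comm]
  ring

lemma modeEnergy_eq_of_free {c : ℝ} {g : ℝ → ℂ} (hg : ContDiff ℝ 2 g)
    (hode : ∀ t, deriv (deriv g) t = -(c : ℂ) * g t) (t₁ t₂ : ℝ) :
    modeEnergy c g t₁ = modeEnergy c g t₂ := by
  have hderiv (t : ℝ) : HasDerivAt (modeEnergy c g) 0 t := by
    simpa [hode] using hasDerivAt_modeEnergy c hg t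
  exact is_const_of_deriv_eq_zero (fun t => (hderiv t).differentiableAt)
    (fun t => (hderiv t).deriv) t₁ t₂

lemma hasDerivAt_lowModeEnergy_eq_zero {N : ℕ} {a : ℝ → (Fin 3 → ℤ) → ℂ}
    (hreg : ∀ n, ContDiff ℝ 2 (fun t => a t n)) (hsym : ∀ t, HermSymm (a t))
    (hode : ∀ t n, deriv (deriv (fun t' => a t' n)) t
      = -(((nsqZ n : ℝ)) : ℂ) * a t n - cubicTrunc N (a t) n) (t : ℝ) :
    HasDerivAt (fun s => (1 / 2) * ∑ n ∈ latticeBall N, modeEnergy (nsqZ n) (fun t' => a t' n) s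
      + (1 / 4) * (quarticForm N (a s) (a s) (a s) (a s)).re) 0 t := by
  have hkin := HasDerivAt.fun_sum (u := latticeBall N) fun n _ =>
    hasDerivAt_modeEnergy (nsqZ n) (hreg n) t
  have hpot := Complex.reCLM.hasFDerivAt.comp_hasDerivAt t <| hasDerivAt_quarticForm_diag N
    fun n => ((hreg n).differentiable two_ne_zero t).hasDerivAt
  refine ((hkin.const_mul _).add (hpot.const_mul _)).congr_deriv ?_
  have hforce (n : Fin 3 → ℤ) : deriv (deriv (fun t' => a t' n)) t + (nsqZ n : ℝ) * a t n
      = -cubicTrunc N (a t) n := by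
    rw [hode]; ring
  simp only [hforce, inner_neg_right, mul_neg, sum_neg_distrib, ← mul_sum,
    sum_inner_cubicTrunc N (hsym t), Complex.reCLM_apply, Complex.mul_re, Complex.re_ofNat,
    Complex.im_ofNat]
  ring

lemma summable_mul_norm_sq_of_hNormSq_ne_top {σ : ℝ} {b : (Fin 3 → ℤ) → ℂ}
    (hb : hNormSq σ b ≠ ⊤) {w : (Fin 3 → ℤ) → ℝ} (hw₀ : ∀ n, 0 ≤ w n)
    (hw : ∀ n, w n ≤ (1 + (nsqZ n : ℝ)) ^ σ) :
    Summable fun n => w n * ‖b n‖ ^ 2 := by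
  refine (ENNReal.summable_toReal hb).of_nonneg_of_le
    (fun n => mul_nonneg (hw₀ n) (sq_nonneg _)) fun n => ?_
  have hbase : 0 ≤ 1 + (nsqZ n : ℝ) := by linarith [nsqZ_nonneg n]
  rw [ENNReal.toReal_mul, ENNReal.toReal_ofReal (Real.rpow_nonneg hbase σ)]
  simpa using mul_le_mul_of_nonneg_right (hw n) (sq_nonneg ‖b n‖)

lemma ne_top_of_forall_Icc_rpow_add_rpow_le {x y : ℝ → ℝ≥0∞}
    (h : ∀ T : ℝ, 0 < T → ∃ M : ℝ≥0∞, M ≠ ⊤ ∧ ∀ t ∈ Set.Icc (-T) T,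
      x t ^ (1 / 2 : ℝ) + y t ^ (1 / 2 : ℝ) ≤ M) (t : ℝ) :
    x t ≠ ⊤ ∧ y t ≠ ⊤ := by
  obtain ⟨M, hM, hle⟩ := h (|t| + 1) (by positivity)
  have hsum := ne_top_of_le_ne_top hM
    (hle t ⟨by linarith [neg_abs_le t], by linarith [le_abs_self t]⟩)
  rw [ENNReal.add_ne_top] at hsum
  simpa [ENNReal.rpow_eq_top_iff] using hsum

lemma summable_nsqZ_mul_norm_sq {σ : ℝ} (hσ : 1 ≤ σ) {b : (Fin 3 → ℤ) → ℂ}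
    (hb : hNormSq σ b ≠ ⊤) : Summable fun n => (nsqZ n : ℝ) * ‖b n‖ ^ 2 := by
  refine summable_mul_norm_sq_of_hNormSq_ne_top hb nsqZ_nonneg fun n => ?_
  calc (nsqZ n : ℝ) ≤ 1 + nsqZ n := by linarith
    _ ≤ (1 + nsqZ n) ^ σ := Real.self_le_rpow_of_one_le (by linarith [nsqZ_nonneg n]) hσ

lemma summable_norm_sq {σ : ℝ} (hσ : 0 ≤ σ) {b : (Fin 3 → ℤ) → ℂ} (hb : hNormSq σ b ≠ ⊤) :
    Summable fun n => ‖b n‖ ^ 2 := by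
  simpa using summable_mul_norm_sq_of_hNormSq_ne_top hb (fun _ => zero_le_one) fun n =>
    Real.one_le_rpow (by linarith [nsqZ_nonneg n]) hσ

lemma truncEnergy_eq_tsum_modeEnergy {N : ℕ} {a : ℝ → (Fin 3 → ℤ) → ℂ} {t : ℝ}
    (hpos : Summable fun n => (nsqZ n : ℝ) * ‖a t n‖ ^ 2)
    (hvel : Summable fun n => ‖deriv (fun t' => a t' n) t‖ ^ 2) :
    truncEnergy N a t = (1 / 2) * ∑' n, modeEnergy (nsqZ n) (fun t' => a t' n) t
      + (1 / 4) * (quarticForm N (a t) (a t) (a t) (a t)).re := by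
  rw [truncEnergy, quarticForm]
  simp only [modeEnergy]
  rw [hpos.tsum_add hvel]
  ring

/-- Conservation of the truncated energy (equation (2.3) of the paper): for any global `C²`,
Hermitian-symmetric, locally `𝓗^σ`-bounded solution of the truncated NLW system
`∂ₜ²a(n) = −|n|²a(n) − c_N(a)(n)` with `σ ≥ 1`, the energy `E_N(t)` is independent of `t`. -/
theorem truncated_energy_conservation (σ : ℝ) (hσ : 1 ≤ σ) (N : ℕ)
    (a : ℝ → (Fin 3 → ℤ) → ℂ)
    (hreg : ∀ n, ContDiff ℝ 2 (fun t => a t n))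
    (hsym : ∀ t, HermSymm (a t))
    (hode : ∀ t n, deriv (deriv (fun t' => a t' n)) t
      = -(((nsqZ n : ℝ)) : ℂ) * a t n - cubicTrunc N (a t) n)
    (hbdd : ∀ T : ℝ, 0 < T → ∃ M : ℝ≥0∞, M ≠ ⊤ ∧ ∀ t ∈ Set.Icc (-T) T,
        hNormSq σ (a t) ^ (1/2 : ℝ)
          + hNormSq (σ - 1) (fun n => deriv (fun t' => a t' n) t) ^ (1/2 : ℝ) ≤ M) :
    ∀ t₁ t₂ : ℝ, truncEnergy N a t₁ = truncEnergy N a t₂ := by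
  intro t₁ t₂
  have hfin := ne_top_of_forall_Icc_rpow_add_rpow_le hbdd
  have hpos (t : ℝ) := summable_nsqZ_mul_norm_sq hσ (hfin t).1
  have hvel (t : ℝ) := summable_norm_sq (by linarith) (hfin t).2
  have hmode (t : ℝ) : Summable fun n => modeEnergy (nsqZ n) (fun t' => a t' n) t :=
    (hpos t).add (hvel t)
  have hhigh (n) (hn : n ∉ latticeBall N) :
      modeEnergy (nsqZ n) (fun t' => a t' n) t₁ = modeEnergy (nsqZ n) (fun t' => a t' n) t₂ :=
    modeEnergy_eq_of_free (hreg n) (fun t => by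
      rw [hode, cubicTrunc, if_neg (mt mem_latticeBall.mpr hn), sub_zero]) t₁ t₂
  have hlow := is_const_of_deriv_eq_zero
    (fun t => (hasDerivAt_lowModeEnergy_eq_zero hreg hsym hode t).differentiableAt)
    (fun t => (hasDerivAt_lowModeEnergy_eq_zero hreg hsym hode t).deriv) t₁ t₂
  have htsum : ∑' n, modeEnergy (nsqZ n) (fun t' => a t' n) t₁
      - ∑' n, modeEnergy (nsqZ n) (fun t' => a t' n) t₂
      = ∑ n ∈ latticeBall N, modeEnergy (nsqZ n) (fun t' => a t' n) t₁
        - ∑ n ∈ latticeBall N, modeEnergy (nsqZ n) (fun t' => a t' n) t₂ := by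
    rw [← (hmode t₁).tsum_sub (hmode t₂), ← sum_sub_distrib]
    exact tsum_eq_sum fun n hn => sub_eq_zero.mpr (hhigh n hn)
  rw [truncEnergy_eq_tsum_modeEnergy (hpos t₁) (hvel t₁),
    truncEnergy_eq_tsum_modeEnergy (hpos t₂) (hvel t₂)]
  linarith
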